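/- arXiv:1103.2261 — 3 statements merged into one kernel-verified Lean document; each statement's English description precedes it below -/
import Mathlib

section
/- Let H be a prebialgebra. If the right monoidality axiom (rm) or the right comonoidality axiom (rc) holds, then the map ε_t: H → H, ε_t(h) = ε(1₍₁₎h)1₍₂₎, is idempotent: ε_t ∘ ε_t = ε_t. -/
open TensorProduct Coalgebra

section Prebialgebra

variable (R H : Type) [CommRing R] [Ring H] [Algebra R H] [Coalgebra R H]

/-- The target map `ε_t(h) = ε(1₍₁₎h)1₍₂₎`. -/
noncomputable def epsT : H →ₗ[R] H :=
  (TensorProduct.lid R H).toLinearMap ∘ₗ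
    TensorProduct.map Coalgebra.counit LinearMap.id ∘ₗ
    LinearMap.mulLeft R (Coalgebra.comul (R := R) (1 : H)) ∘ₗ
    Algebra.TensorProduct.includeLeft.toLinearMap

/-- The source map `ε_s(h) = ε(h1₍₂₎)1₍₁₎`. -/
noncomputable def epsS : H →ₗ[R] H :=
  (TensorProduct.rid R H).toLinearMap ∘ₗ
    TensorProduct.map LinearMap.id Coalgebra.counit ∘ₗ
    LinearMap.mulRight R (Coalgebra.comul (R := R) (1 : H)) ∘ₗ
    Algebra.TensorProduct.includeRight.toLinearMap

/-- The map `ε̄_s(h) = ε(1₍₂₎h)1₍₁₎`. -/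
noncomputable def epsSbar : H →ₗ[R] H :=
  (TensorProduct.rid R H).toLinearMap ∘ₗ
    TensorProduct.map LinearMap.id Coalgebra.counit ∘ₗ
    LinearMap.mulLeft R (Coalgebra.comul (R := R) (1 : H)) ∘ₗ
    Algebra.TensorProduct.includeRight.toLinearMap

/-- The map `ε̄_t(h) = ε(h1₍₁₎)1₍₂₎`. -/
noncomputable def epsTbar : H →ₗ[R] H :=
  (TensorProduct.lid R H).toLinearMap ∘ₗ
    TensorProduct.map Coalgebra.counit LinearMap.id ∘ₗ
    LinearMap.mulRight R (Coalgebra.comul (R := R) (1 : H)) ∘ₗ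
    Algebra.TensorProduct.includeLeft.toLinearMap

/-- The prebialgebra axiom: the comultiplication is multiplicative, `Δ(hk) = Δ(h)Δ(k)`. -/
def ComulMul : Prop :=
  ∀ a b : H,
    Coalgebra.comul (R := R) (a * b) = Coalgebra.comul (R := R) a * Coalgebra.comul (R := R) b

/-- Axiom (lm): `ε(hkl) = ε(hk₍₁₎)ε(k₍₂₎l)` for all `h,k,l`. -/
noncomputable def LM : Prop :=
  ∀ h k l : H,
    Coalgebra.counit (R := R) (h * k * l) =
      LinearMap.mul' R R
        (TensorProduct.map (Coalgebra.counit ∘ₗ LinearMap.mulLeft R h)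
          (Coalgebra.counit ∘ₗ LinearMap.mulRight R l) (Coalgebra.comul k))

/-- Axiom (rm): `ε(hkl) = ε(hk₍₂₎)ε(k₍₁₎l)` for all `h,k,l`. -/
noncomputable def RM : Prop :=
  ∀ h k l : H,
    Coalgebra.counit (R := R) (h * k * l) =
      LinearMap.mul' R R
        (TensorProduct.map (Coalgebra.counit ∘ₗ LinearMap.mulRight R l)
          (Coalgebra.counit ∘ₗ LinearMap.mulLeft R h) (Coalgebra.comul k))

/-- `Δ²(1) = (id ⊗ Δ)(Δ(1))`, an element of `H ⊗ (H ⊗ H)`. -/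
noncomputable def comulSq1 : H ⊗[R] (H ⊗[R] H) :=
  (TensorProduct.map LinearMap.id Coalgebra.comul) (Coalgebra.comul (R := R) (1 : H))

/-- `1₍₁₎ ⊗ 1₍₂₎ ⊗ 1`, an element of `H ⊗ (H ⊗ H)`. -/
noncomputable def d1Left : H ⊗[R] (H ⊗[R] H) :=
  (TensorProduct.map LinearMap.id Algebra.TensorProduct.includeLeft.toLinearMap)
    (Coalgebra.comul (R := R) (1 : H))

/-- `1 ⊗ 1₍₁₎ ⊗ 1₍₂₎`, an element of `H ⊗ (H ⊗ H)`. -/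
noncomputable def d1Right : H ⊗[R] (H ⊗[R] H) :=
  (1 : H) ⊗ₜ[R] (Coalgebra.comul (R := R) (1 : H))

/-- Axiom (lc): `Δ²(1) = 1₍₁₎ ⊗ 1₍₂₎1₍₁'₎ ⊗ 1₍₂'₎`. -/
noncomputable def LC : Prop := comulSq1 R H = d1Left R H * d1Right R H

/-- Axiom (rc): `Δ²(1) = 1₍₁₎ ⊗ 1₍₁'₎1₍₂₎ ⊗ 1₍₂'₎`. -/
noncomputable def RC : Prop := comulSq1 R H = d1Right R H * d1Left R H

/-- The map `g : H → H*`, `⟨g(h), k⟩ = ε(kh)`. -/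
noncomputable def gmap : H →ₗ[R] (H →ₗ[R] R) :=
  LinearMap.llcomp R H H R (Coalgebra.counit (R := R)) ∘ₗ (LinearMap.mul R H).flip

/-- The map `g' : H → H*`, `⟨g'(h), k⟩ = ε(hk)`. -/
noncomputable def gmap' : H →ₗ[R] (H →ₗ[R] R) :=
  LinearMap.llcomp R H H R (Coalgebra.counit (R := R)) ∘ₗ LinearMap.mul R H

/-- The map `f : H* → H`, `f(h*) = ⟨h*,1₍₁₎⟩1₍₂₎`. -/
noncomputable def fmap (φ : H →ₗ[R] R) : H :=
  (TensorProduct.lid R H)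
    ((TensorProduct.map φ LinearMap.id) (Coalgebra.comul (R := R) (1 : H)))

end Prebialgebra

/-!
For `t = ∑ t' ⊗ t''` put `E_t(x) = ∑ ε(t' x) t''` (`counitAction t x`), so that `ε_t = E_{Δ1}`;
`E_t(x)` only depends on the functional `a ↦ ε(a x)`. Under (rm) with `k = 1`,
`ε(a ε_t(h)) = ε(a 1₍₂₎) ε(1₍₁₎ h) = ε(a h)`, hence `ε_t(ε_t h) = ε_t h`. Under (rc), apply
`a ⊗ b ⊗ c ↦ ε(a h) ε(b) c` (`counitContract h`) to both sides of (rc): by the counit axiom the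
left side `Δ²(1)` gives `ε_t h`, and the right side gives `ε_t (ε_t h)`.
-/

section CounitAction

variable {R H : Type} [CommRing R] [Ring H] [Algebra R H] [Coalgebra R H]

noncomputable def counitAction : H ⊗[R] H →ₗ[R] H →ₗ[R] H :=
  ((LinearMap.mul R (H ⊗[R] H)).compl₂ Algebra.TensorProduct.includeLeft.toLinearMap).compr₂
    ((TensorProduct.lid R H).toLinearMap ∘ₗ TensorProduct.map Coalgebra.counit LinearMap.id)

theorem epsT_eq_counitAction : epsT R H = counitAction (comul (R := R) (1 : H)) := rfl

@[simp]
theorem counitAction_tmul_apply (a b x : H) :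
    counitAction (a ⊗ₜ[R] b) x = counit (R := R) (a * x) • b := by
  simp [counitAction]

theorem counitAction_congr_right (t : H ⊗[R] H) {x y : H}
    (hxy : ∀ a : H, counit (R := R) (a * x) = counit (a * y)) :
    counitAction t x = counitAction t y := by
  induction t using TensorProduct.induction_on with
  | zero => simp
  | tmul a b => simp [hxy a]
  | add s t hs ht => simp [hs, ht]

theorem counit_mul_counitAction_apply (t : H ⊗[R] H) (a x : H) :
    counit (R := R) (a * counitAction t x) =
      LinearMap.mul' R R
        (TensorProduct.map (counit ∘ₗ LinearMap.mulRight R x) (counit ∘ₗ LinearMap.mulLeft R a) t) := by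
  induction t using TensorProduct.induction_on with
  | zero => simp
  | tmul b c => simp [mul_comm]
  | add s t hs ht => simp [mul_add, hs, ht]

theorem counit_mul_epsT_apply (hrm : RM R H) (a h : H) :
    counit (R := R) (a * epsT R H h) = counit (a * h) := by
  rw [epsT_eq_counitAction, counit_mul_counitAction_apply, ← hrm, mul_one]

theorem epsT_comp_epsT_of_RM (hrm : RM R H) : epsT R H ∘ₗ epsT R H = epsT R H := by
  ext h
  exact counitAction_congr_right _ (counit_mul_epsT_apply hrm · h)

noncomputable def counitContract (h : H) : H ⊗[R] (H ⊗[R] H) →ₗ[R] H :=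
  (TensorProduct.lid R H).toLinearMap ∘ₗ
    TensorProduct.map (counit ∘ₗ LinearMap.mulRight R h)
      ((TensorProduct.lid R H).toLinearMap ∘ₗ TensorProduct.map counit LinearMap.id)

@[simp]
theorem counitContract_tmul (h a b c : H) :
    counitContract (R := R) h (a ⊗ₜ (b ⊗ₜ c)) = counit (R := R) (a * h) • counit (R := R) b • c := by
  simp [counitContract, smul_comm (counit (R := R) b)]

theorem counitContract_map_comul (h : H) (t : H ⊗[R] H) :
    counitContract h (TensorProduct.map LinearMap.id comul t) = counitAction t h := by
  induction t using TensorProduct.induction_on with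
  | zero => simp
  | tmul a b =>
    have hb : TensorProduct.lid R H (TensorProduct.map counit LinearMap.id (comul (R := R) b)) = b := by
      rw [← LinearMap.rTensor, rTensor_counit_comul, TensorProduct.lid_tmul, one_smul]
    simp [counitContract, hb]
  | add s t hs ht => simp only [map_add, LinearMap.add_apply, hs, ht]

theorem counitContract_tmul_mul_map_includeLeft (h : H) (s t : H ⊗[R] H) :
    counitContract h (((1 : H) ⊗ₜ[R] s) *
        TensorProduct.map LinearMap.id Algebra.TensorProduct.includeLeft.toLinearMap t) =
      counitAction s (counitAction t h) := by
  induction t using TensorProduct.induction_on with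
  | zero => simp
  | tmul a b =>
    induction s using TensorProduct.induction_on with
    | zero => simp
    | tmul c d => simp
    | add s₁ s₂ hs₁ hs₂ => simp_all [TensorProduct.tmul_add, add_mul]
  | add t₁ t₂ ht₁ ht₂ => simp only [map_add, mul_add, LinearMap.add_apply, ht₁, ht₂]

theorem epsT_comp_epsT_of_RC (hrc : RC R H) : epsT R H ∘ₗ epsT R H = epsT R H := by
  ext h
  calc epsT R H (epsT R H h) = counitContract h (d1Right R H * d1Left R H) :=
        (counitContract_tmul_mul_map_includeLeft h _ _).symm
    _ = counitContract h (comulSq1 R H) := by rw [hrc]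
    _ = epsT R H h := counitContract_map_comul h _

end CounitAction

theorem epsT_idempotent_general
    (R H : Type) [CommRing R] [Ring H] [Algebra R H] [Coalgebra R H]
    (hax : RM R H ∨ RC R H) :
    epsT R H ∘ₗ epsT R H = epsT R H :=
  hax.elim epsT_comp_epsT_of_RM epsT_comp_epsT_of_RC

/-- If a prebialgebra `H` satisfies (rm) or (rc), then `ε_t` is idempotent. -/
theorem epsT_idempotent
    (R H : Type) [CommRing R] [Ring H] [Algebra R H] [Coalgebra R H]
    (hpre : ComulMul R H) (hax : RM R H ∨ RC R H) :
    epsT R H ∘ₗ epsT R H = epsT R H :=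
  epsT_idempotent_general R H hax
end

section
/- Let H be a prebialgebra satisfying (rm) or (rc). Then H_t = Im(ε_t) is a finitely generated projective k-module, with finite dual basis given by 1₍₂₎ ⊗ g'(1₍₁₎) ∈ H_t ⊗ (H_t)*, where g'(h) = ε(h−); that is, z = ε(1₍₁₎z)1₍₂₎ for every z ∈ H_t and 1₍₂₎ ⊗ g'(1₍₁₎) lies in H_t ⊗ H_s* under the identification H_s* ≅ (H_t)*. -/
open TensorProduct Coalgebra

/-! The element `t = 1₍₂₎ ⊗ g'(1₍₁₎)` of `H ⊗ H*` satisfies `(ε_t ⊗ id) t = (id ⊗ (- ∘ ε_t)) t` in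
every prebialgebra, and each axiom makes `t` fixed by `ε_t ⊗ id`: (rm) gives `g'(h) ∘ ε_t = g'(h)`,
while (rc) gives `1₍₁₎ ⊗ ε_t(1₍₂₎) = Δ(1)`. Contracting `t` with `h ∈ H` returns `ε_t(h)`, so `ε_t`
is idempotent. Writing `Δ(1)` as a finite sum `∑ᵢ aᵢ ⊗ bᵢ`, the map `ε_t = ∑ᵢ ε(aᵢ -) bᵢ` factors
through a finite free module, hence its image is a direct summand of one.
-/

theorem LinearMap.finite_projective_range_of_isIdempotentElem {R M F : Type*} [CommRing R]
    [AddCommGroup M] [Module R M] [AddCommGroup F] [Module R F]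
    [Module.Finite R F] [Module.Projective R F]
    {f : M →ₗ[R] M} (hf : IsIdempotentElem f) (i : M →ₗ[R] F) (s : F →ₗ[R] M)
    (hfac : f = s ∘ₗ i) :
    Module.Finite R (LinearMap.range f) ∧ Module.Projective R (LinearMap.range f) := by
  let r : F →ₗ[R] LinearMap.range f := f.rangeRestrict ∘ₗ s
  let j : LinearMap.range f →ₗ[R] F := i ∘ₗ (LinearMap.range f).subtype
  have hrj : r ∘ₗ j = LinearMap.id := by
    ext ⟨_, y, rfl⟩
    change f (s (i (f y))) = f y
    have hff : ∀ x, f (f x) = f x := LinearMap.congr_fun hf.eq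
    rw [← LinearMap.comp_apply s i, ← hfac, hff, hff]
  refine ⟨Module.Finite.of_surjective r fun z => ⟨j z, ?_⟩, Module.Projective.of_split j r hrj⟩
  rw [← LinearMap.comp_apply, hrj, LinearMap.id_apply]

section Prebialgebra

variable {R H : Type} [CommRing R] [Ring H] [Algebra R H] [Coalgebra R H]

variable (R H) in
/-- The paper's `1₍₂₎ ⊗ g'(1₍₁₎)`. -/
noncomputable def epsTDualBasis : H ⊗[R] (H →ₗ[R] R) :=
  TensorProduct.map LinearMap.id (gmap' R H) (TensorProduct.comm R H H (comul (R := R) (1 : H)))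

theorem gmap'_apply (a h : H) : gmap' R H a h = counit (R := R) (a * h) := rfl

theorem epsT_apply_eq_sum (S : Finset (H × H))
    (hS : comul (R := R) (1 : H) = ∑ p ∈ S, p.1 ⊗ₜ[R] p.2) (h : H) :
    epsT R H h = ∑ p ∈ S, counit (R := R) (p.1 * h) • p.2 := by
  simp only [epsT, LinearMap.comp_apply, AlgHom.toLinearMap_apply,
    Algebra.TensorProduct.includeLeft_apply, LinearMap.mulLeft_apply, hS,
    Finset.sum_mul, Algebra.TensorProduct.tmul_mul_tmul, mul_one, map_sum,
    TensorProduct.map_tmul, LinearMap.id_coe, id_eq, LinearEquiv.coe_coe,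
    TensorProduct.lid_tmul]

theorem epsT_eq_linearCombination_comp_pi (S : Finset (H × H))
    (hS : comul (R := R) (1 : H) = ∑ p ∈ S, p.1 ⊗ₜ[R] p.2) :
    epsT R H = Fintype.linearCombination R (fun p : S => p.1.2) ∘ₗ
      LinearMap.pi (fun p : S => gmap' R H p.1.1) := by
  ext h
  rw [epsT_apply_eq_sum S hS, LinearMap.comp_apply, Fintype.linearCombination_apply]
  exact (Finset.sum_coe_sort S fun p => counit (R := R) (p.1 * h) • p.2).symm

theorem epsTDualBasis_eq_sum (S : Finset (H × H))
    (hS : comul (R := R) (1 : H) = ∑ p ∈ S, p.1 ⊗ₜ[R] p.2) :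
    epsTDualBasis R H = ∑ p ∈ S, p.2 ⊗ₜ[R] gmap' R H p.1 := by
  simp [epsTDualBasis, hS]

theorem gmap'_comp_epsT (S : Finset (H × H))
    (hS : comul (R := R) (1 : H) = ∑ p ∈ S, p.1 ⊗ₜ[R] p.2) (a : H) :
    gmap' R H a ∘ₗ epsT R H = ∑ q ∈ S, counit (R := R) (a * q.2) • gmap' R H q.1 := by
  ext h
  simp only [LinearMap.comp_apply, gmap'_apply, epsT_apply_eq_sum S hS h, map_sum, map_smul,
    smul_eq_mul, LinearMap.coe_sum, Finset.sum_apply, LinearMap.smul_apply, mul_comm]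

theorem lTensor_lcomp_epsT_epsTDualBasis :
    (LinearMap.lcomp R R (epsT R H)).lTensor H (epsTDualBasis R H) =
      (epsT R H).rTensor _ (epsTDualBasis R H) := by
  obtain ⟨S, hS⟩ := TensorProduct.exists_finset (comul (R := R) (1 : H))
  rw [epsTDualBasis_eq_sum S hS, map_sum, map_sum]
  simp only [LinearMap.lTensor_tmul, LinearMap.rTensor_tmul, LinearMap.lcomp_apply',
    gmap'_comp_epsT S hS, epsT_apply_eq_sum S hS, TensorProduct.tmul_sum, TensorProduct.sum_tmul,
    TensorProduct.tmul_smul, ← TensorProduct.smul_tmul']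
  exact Finset.sum_comm

theorem counit_mul_epsT_of_RM (hrm : RM R H) (k h : H) :
    counit (R := R) (k * epsT R H h) = counit (R := R) (k * h) := by
  obtain ⟨S, hS⟩ := TensorProduct.exists_finset (comul (R := R) (1 : H))
  -- (rm) with middle factor `1`
  have hrm1 := hrm k 1 h
  rw [mul_one, hS, map_sum, map_sum] at hrm1
  rw [hrm1, epsT_apply_eq_sum S hS, Finset.mul_sum, map_sum]
  refine Finset.sum_congr rfl fun p _ => ?_
  simp [mul_comm]

theorem lcomp_epsT_comp_gmap'_of_RM (hrm : RM R H) :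
    LinearMap.lcomp R R (epsT R H) ∘ₗ gmap' R H = gmap' R H := by
  ext a h
  exact counit_mul_epsT_of_RM hrm a h

theorem Algebra.TensorProduct.one_tmul_mul_eq_lTensor_mulLeft {R A B : Type*} [CommSemiring R]
    [Semiring A] [Semiring B] [Algebra R A] [Algebra R B] (b : B) (x : A ⊗[R] B) :
    (1 : A) ⊗ₜ[R] b * x = (LinearMap.mulLeft R b).lTensor A x := by
  induction x using TensorProduct.induction_on with
  | zero => simp
  | tmul a b' => simp
  | add x y hx hy => rw [mul_add, hx, hy, map_add]

theorem d1Right_mul_d1Left :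
    d1Right R H * d1Left R H =
      (LinearMap.mulLeft R (comul (R := R) (1 : H)) ∘ₗ
        Algebra.TensorProduct.includeLeft.toLinearMap).lTensor H (comul (R := R) (1 : H)) := by
  rw [d1Right, Algebra.TensorProduct.one_tmul_mul_eq_lTensor_mulLeft, d1Left,
    LinearMap.lTensor_comp_apply]
  rfl

theorem lTensor_epsT_comul_one_of_RC (hrc : RC R H) :
    (epsT R H).lTensor H (comul (R := R) (1 : H)) = comul (R := R) (1 : H) := by
  have hrc' := congr_arg
    (((TensorProduct.lid R H).toLinearMap ∘ₗ (counit (R := R)).rTensor H).lTensor H) hrc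
  have hcounit : ((TensorProduct.lid R H).toLinearMap ∘ₗ (counit (R := R)).rTensor H) ∘ₗ
      comul (R := R) = LinearMap.id := by
    rw [LinearMap.comp_assoc, Coalgebra.rTensor_counit_comp_comul]
    ext; simp
  rw [comulSq1, d1Right_mul_d1Left] at hrc'
  change LinearMap.lTensor H _ (LinearMap.lTensor H _ _) =
    LinearMap.lTensor H _ (LinearMap.lTensor H _ _) at hrc'
  rw [← LinearMap.lTensor_comp_apply, ← LinearMap.lTensor_comp_apply, hcounit,
    LinearMap.lTensor_id, LinearMap.id_apply] at hrc'
  exact hrc'.symm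

theorem rTensor_epsT_epsTDualBasis (hax : RM R H ∨ RC R H) :
    (epsT R H).rTensor _ (epsTDualBasis R H) = epsTDualBasis R H := by
  rcases hax with hrm | hrc
  · rw [← lTensor_lcomp_epsT_epsTDualBasis, epsTDualBasis, LinearMap.lTensor_map,
      lcomp_epsT_comp_gmap'_of_RM hrm]
  · rw [epsTDualBasis, LinearMap.rTensor_map, LinearMap.comp_id, ← LinearMap.id_comp (epsT R H),
      ← LinearMap.map_rTensor, LinearMap.rTensor_comm, lTensor_epsT_comul_one_of_RC hrc]

theorem epsT_apply_eq_rid_lTensor_eval (h : H) :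
    epsT R H h =
      TensorProduct.rid R H ((Module.Dual.eval R H h).lTensor H (epsTDualBasis R H)) := by
  obtain ⟨S, hS⟩ := TensorProduct.exists_finset (comul (R := R) (1 : H))
  rw [epsT_apply_eq_sum S hS, epsTDualBasis_eq_sum S hS]
  simp [gmap'_apply]

theorem epsT_isIdempotentElem (hax : RM R H ∨ RC R H) : IsIdempotentElem (epsT R H) := by
  ext h
  change epsT R H (epsT R H h) = epsT R H h
  have hnat : ∀ x : H ⊗[R] (H →ₗ[R] R),
      TensorProduct.rid R H ((Module.Dual.eval R H h).lTensor H ((epsT R H).rTensor _ x)) =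
        epsT R H (TensorProduct.rid R H ((Module.Dual.eval R H h).lTensor H x)) := by
    intro x
    induction x using TensorProduct.induction_on with
    | zero => simp
    | tmul a φ => simp
    | add x y hx hy => simp only [map_add, hx, hy]
  rw [epsT_apply_eq_rid_lTensor_eval h, ← hnat, rTensor_epsT_epsTDualBasis hax]

end Prebialgebra

theorem Ht_finite_projective_dual_basis_general
    (R H : Type) [CommRing R] [Ring H] [Algebra R H] [Coalgebra R H]
    (hax : RM R H ∨ RC R H) :
    Module.Finite R ↥(LinearMap.range (epsT R H)) ∧
    Module.Projective R ↥(LinearMap.range (epsT R H)) ∧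
    (∀ z ∈ LinearMap.range (epsT R H), epsT R H z = z) ∧
    (TensorProduct.map (epsT R H) (LinearMap.lcomp R R (epsT R H)))
        ((TensorProduct.map LinearMap.id (gmap' R H))
          ((TensorProduct.comm R H H) (Coalgebra.comul (R := R) (1 : H)))) =
      (TensorProduct.map LinearMap.id (gmap' R H))
        ((TensorProduct.comm R H H) (Coalgebra.comul (R := R) (1 : H))) := by
  obtain ⟨S, hS⟩ := TensorProduct.exists_finset (comul (R := R) (1 : H))
  have hidem := epsT_isIdempotentElem hax
  obtain ⟨hfin, hproj⟩ := LinearMap.finite_projective_range_of_isIdempotentElem hidem _ _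
    (epsT_eq_linearCombination_comp_pi S hS)
  refine ⟨hfin, hproj, fun z hz => (LinearMap.IsIdempotentElem.mem_range_iff hidem).mp hz, ?_⟩
  change TensorProduct.map _ _ (epsTDualBasis R H) = epsTDualBasis R H
  rw [← LinearMap.rTensor_comp_lTensor, LinearMap.comp_apply, lTensor_lcomp_epsT_epsTDualBasis,
    rTensor_epsT_epsTDualBasis hax, rTensor_epsT_epsTDualBasis hax]

/-- If a prebialgebra `H` satisfies (rm) or (rc), then `H_t = Im(ε_t)` is
finitely generated projective over `k`, with finite dual basis `1₍₂₎ ⊗ g'(1₍₁₎)`: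
every `z ∈ H_t` satisfies `z = ε(1₍₁₎z)1₍₂₎ = ε_t(z)`, and `1₍₂₎ ⊗ g'(1₍₁₎)` lies in
`H_t ⊗ H_s*` in the sense that it is fixed by `ε_t ⊗ ε_s*`. -/
theorem Ht_finite_projective_dual_basis
    (R H : Type) [CommRing R] [Ring H] [Algebra R H] [Coalgebra R H]
    (hpre : ComulMul R H) (hax : RM R H ∨ RC R H) :
    Module.Finite R ↥(LinearMap.range (epsT R H)) ∧
    Module.Projective R ↥(LinearMap.range (epsT R H)) ∧
    (∀ z ∈ LinearMap.range (epsT R H), epsT R H z = z) ∧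
    (TensorProduct.map (epsT R H) (LinearMap.lcomp R R (epsT R H)))
        ((TensorProduct.map LinearMap.id (gmap' R H))
          ((TensorProduct.comm R H H) (Coalgebra.comul (R := R) (1 : H)))) =
      (TensorProduct.map LinearMap.id (gmap' R H))
        ((TensorProduct.comm R H H) (Coalgebra.comul (R := R) (1 : H))) :=
  Ht_finite_projective_dual_basis_general R H hax
end

section
/- Let H be a monoidal prebialgebra (satisfying (lm) and (rm)). Then the map ε̄_s restricts to an anti-algebra isomorphism H_t → H̄_s with inverse the restriction of ε_t, where ε_t(h)=ε(1₍₁₎h)1₍₂₎, ε̄_s(h)=ε(1₍₂₎h)1₍₁₎, H_t = Im(ε_t), H̄_s = Im(ε̄_s). In particular ε_t(y)ε_t(y') = ε_t(y'y) for all y,y' ∈ H̄_s. -/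
open TensorProduct Coalgebra

/-! Write `g(h) = ε(· h)`; both `ε_t = ε(1₍₁₎ ·) 1₍₂₎` and `ε̄_s = 1₍₁₎ ε(1₍₂₎ ·)` factor
through `g`. For `k = 1` the axioms (rm) and (lm) say `ε(u ε_t(h)) = ε(uh) = ε(u ε̄_s(h))`, so
`ε_t` and `ε̄_s` are idempotent and mutually inverse on their images. The heart of the argument
is the pair of identities `u ε_t(c) = ε(u₍₁₎c) u₍₂₎` and `u ε̄_s(c) = u₍₁₎ ε(u₍₂₎c)`, obtained
from multiplicativity of `Δ`, `u = ε(u₍₁₎)u₍₂₎` and (rm), resp. (lm). They give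
`g(ε_t(c) d) = ε(·₍₁₎c) ε(·₍₂₎d) = g(ε̄_s(d) c)` and, by coassociativity,
`ε_t(c) ε_t(d) = ε_t(ε_t(c) d)` and `ε̄_s(c) ε̄_s(d) = ε̄_s(ε̄_s(c) d)`; the anti-multiplicativity
statements follow by combining these. -/

section Slant

variable {R H M : Type} [CommSemiring R] [AddCommMonoid H] [Module R H]
  [AddCommMonoid M] [Module R M]

noncomputable def slantLeft (φ : H →ₗ[R] R) : H ⊗[R] M →ₗ[R] M :=
  (TensorProduct.lid R M).toLinearMap ∘ₗ φ.rTensor M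

noncomputable def slantRight (φ : H →ₗ[R] R) : M ⊗[R] H →ₗ[R] M :=
  (TensorProduct.rid R M).toLinearMap ∘ₗ φ.lTensor M

@[simp]
lemma slantLeft_tmul (φ : H →ₗ[R] R) (x : H) (m : M) : slantLeft φ (x ⊗ₜ[R] m) = φ x • m :=
  rfl

@[simp]
lemma slantRight_tmul (φ : H →ₗ[R] R) (m : M) (x : H) : slantRight φ (m ⊗ₜ[R] x) = φ x • m :=
  rfl

lemma slantLeft_rTensor {N : Type} [AddCommMonoid N] [Module R N] (φ : H →ₗ[R] R)
    (f : N →ₗ[R] H) (t : N ⊗[R] M) : slantLeft φ (f.rTensor M t) = slantLeft (φ ∘ₗ f) t := by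
  simp only [slantLeft, LinearMap.comp_apply, ← LinearMap.rTensor_comp_apply]

lemma slantRight_lTensor {N : Type} [AddCommMonoid N] [Module R N] (φ : H →ₗ[R] R)
    (f : N →ₗ[R] H) (t : M ⊗[R] N) : slantRight φ (f.lTensor M t) = slantRight (φ ∘ₗ f) t := by
  simp only [slantRight, LinearMap.comp_apply, ← LinearMap.lTensor_comp_apply]

lemma slantLeft_lTensor {N : Type} [AddCommMonoid N] [Module R N] (φ : H →ₗ[R] R)
    (f : M →ₗ[R] N) (t : H ⊗[R] M) : slantLeft φ (f.lTensor H t) = f (slantLeft φ t) := by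
  induction t using TensorProduct.induction_on with
  | zero => simp
  | tmul x y => simp
  | add s t hs ht => simp only [map_add, hs, ht]

lemma slantRight_rTensor {N : Type} [AddCommMonoid N] [Module R N] (φ : H →ₗ[R] R)
    (f : M →ₗ[R] N) (t : M ⊗[R] H) : slantRight φ (f.rTensor H t) = f (slantRight φ t) := by
  induction t using TensorProduct.induction_on with
  | zero => simp
  | tmul x y => simp
  | add s t hs ht => simp only [map_add, hs, ht]

lemma slantLeft_assoc (φ : H →ₗ[R] R) (t : (H ⊗[R] H) ⊗[R] M) :
    slantLeft φ (TensorProduct.assoc R H H M t) = (slantLeft φ).rTensor M t := by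
  induction t using TensorProduct.induction_on with
  | zero => simp
  | tmul s m =>
    induction s using TensorProduct.induction_on with
    | zero => simp
    | tmul x y => simp [TensorProduct.smul_tmul']
    | add s s' hs hs' => simp only [TensorProduct.add_tmul, map_add, hs, hs']
  | add s t hs ht => simp only [map_add, hs, ht]

lemma slantRight_assoc_symm (φ : H →ₗ[R] R) (t : M ⊗[R] (H ⊗[R] H)) :
    slantRight φ ((TensorProduct.assoc R M H H).symm t) = (slantRight φ).lTensor M t := by
  induction t using TensorProduct.induction_on with
  | zero => simp
  | tmul m s =>
    induction s using TensorProduct.induction_on with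
    | zero => simp
    | tmul x y => simp [TensorProduct.tmul_smul]
    | add s s' hs hs' => simp only [TensorProduct.tmul_add, map_add, hs, hs']
  | add s t hs ht => simp only [map_add, hs, ht]

lemma apply_slantLeft (φ ψ : H →ₗ[R] R) (t : H ⊗[R] H) :
    ψ (slantLeft φ t) = LinearMap.mul' R R (TensorProduct.map φ ψ t) := by
  induction t using TensorProduct.induction_on with
  | zero => simp
  | tmul x y => simp
  | add s t hs ht => simp only [map_add, hs, ht]

lemma apply_slantRight (φ ψ : H →ₗ[R] R) (t : H ⊗[R] H) :
    φ (slantRight ψ t) = LinearMap.mul' R R (TensorProduct.map φ ψ t) := by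
  induction t using TensorProduct.induction_on with
  | zero => simp
  | tmul x y => simp [mul_comm]
  | add s t hs ht => simp only [map_add, hs, ht]

variable [Coalgebra R H]

@[simp]
lemma slantLeft_counit_comul (x : H) : slantLeft counit (comul (R := R) x) = x := by
  simp [slantLeft]

@[simp]
lemma slantRight_counit_comul (x : H) : slantRight counit (comul (R := R) x) = x := by
  simp [slantRight]

lemma comul_slantLeft_comul (φ : H →ₗ[R] R) (x : H) :
    comul (slantLeft φ (comul (R := R) x)) = (slantLeft φ ∘ₗ comul).rTensor H (comul x) := by
  rw [← slantLeft_lTensor, ← Coalgebra.coassoc_apply, slantLeft_assoc,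
    LinearMap.rTensor_comp_apply]

lemma comul_slantRight_comul (φ : H →ₗ[R] R) (x : H) :
    comul (slantRight φ (comul (R := R) x)) = (slantRight φ ∘ₗ comul).lTensor H (comul x) := by
  rw [← slantRight_rTensor, ← Coalgebra.coassoc_symm_apply, slantRight_assoc_symm,
    LinearMap.lTensor_comp_apply]

end Slant

section Prebialgebra

variable {R H : Type} [CommRing R] [Ring H] [Algebra R H] [Coalgebra R H]

@[simp]
lemma gmap_apply (c u : H) : gmap R H c u = counit (u * c) := rfl

lemma epsT_eq_slantLeft (h : H) :
    epsT R H h = slantLeft (gmap R H h) (comul (R := R) (1 : H)) := by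
  suffices ∀ t : H ⊗[R] H, TensorProduct.lid R H (TensorProduct.map counit LinearMap.id
      (t * (h ⊗ₜ[R] 1))) = slantLeft (gmap R H h) t from this _
  intro t
  induction t using TensorProduct.induction_on with
  | zero => simp
  | tmul x y => simp
  | add s t hs ht => simp only [add_mul, map_add, hs, ht]

lemma epsSbar_eq_slantRight (h : H) :
    epsSbar R H h = slantRight (gmap R H h) (comul (R := R) (1 : H)) := by
  suffices ∀ t : H ⊗[R] H, TensorProduct.rid R H (TensorProduct.map LinearMap.id counit
      (t * (1 ⊗ₜ[R] h))) = slantRight (gmap R H h) t from this _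
  intro t
  induction t using TensorProduct.induction_on with
  | zero => simp
  | tmul x y => simp
  | add s t hs ht => simp only [add_mul, map_add, hs, ht]

lemma gmap_mul (x y : H) : gmap R H (x * y) = gmap R H y ∘ₗ LinearMap.mulRight R x := by
  ext u; simp [mul_assoc]

lemma epsSbar_one : epsSbar R H 1 = 1 := by
  rw [epsSbar_eq_slantRight, show gmap R H 1 = counit by ext; simp,
    slantRight_counit_comul]

lemma epsT_congr {x y : H} (h : gmap R H x = gmap R H y) : epsT R H x = epsT R H y := by
  rw [epsT_eq_slantLeft, h, ← epsT_eq_slantLeft]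

lemma epsSbar_congr {x y : H} (h : gmap R H x = gmap R H y) :
    epsSbar R H x = epsSbar R H y := by
  rw [epsSbar_eq_slantRight, h, ← epsSbar_eq_slantRight]

lemma counit_mul_slantLeft_comul (hrm : RM R H) (a p c : H) :
    counit (R := R) (a * slantLeft (gmap R H c) (comul (R := R) p)) =
      counit (R := R) (a * p * c) :=
  (apply_slantLeft (gmap R H c) (gmap' R H a) _).trans (hrm a p c).symm

lemma counit_mul_slantRight_comul (hlm : LM R H) (a p c : H) :
    counit (R := R) (a * slantRight (gmap R H c) (comul (R := R) p)) =
      counit (R := R) (a * p * c) :=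
  (apply_slantRight (gmap' R H a) (gmap R H c) _).trans (hlm a p c).symm

lemma gmap_epsT (hrm : RM R H) (h : H) : gmap R H (epsT R H h) = gmap R H h := by
  ext u
  simpa [epsT_eq_slantLeft] using counit_mul_slantLeft_comul hrm u 1 h

lemma gmap_epsSbar (hlm : LM R H) (h : H) : gmap R H (epsSbar R H h) = gmap R H h := by
  ext u
  simpa [epsSbar_eq_slantRight] using counit_mul_slantRight_comul hlm u 1 h

lemma epsT_epsSbar (hlm : LM R H) (x : H) : epsT R H (epsSbar R H x) = epsT R H x :=
  epsT_congr (gmap_epsSbar hlm x)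

lemma epsSbar_epsT (hrm : RM R H) (x : H) : epsSbar R H (epsT R H x) = epsSbar R H x :=
  epsSbar_congr (gmap_epsT hrm x)

lemma slantLeft_counit_mul_rTensor (hrm : RM R H) (c : H) (w t : H ⊗[R] H) :
    slantLeft counit (w * (slantLeft (gmap R H c) ∘ₗ comul).rTensor H t) =
      slantLeft (gmap R H c) (w * t) := by
  induction t using TensorProduct.induction_on with
  | zero => simp
  | tmul p q =>
    induction w using TensorProduct.induction_on with
    | zero => simp
    | tmul a b =>
      simp [Algebra.TensorProduct.tmul_mul_tmul, counit_mul_slantLeft_comul hrm]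
    | add w w' hw hw' => simp only [add_mul, map_add, hw, hw']
  | add t t' ht ht' => simp only [mul_add, map_add, ht, ht']

lemma slantRight_counit_mul_lTensor (hlm : LM R H) (c : H) (w t : H ⊗[R] H) :
    slantRight counit (w * (slantRight (gmap R H c) ∘ₗ comul).lTensor H t) =
      slantRight (gmap R H c) (w * t) := by
  induction t using TensorProduct.induction_on with
  | zero => simp
  | tmul p q =>
    induction w using TensorProduct.induction_on with
    | zero => simp
    | tmul a b =>
      simp [Algebra.TensorProduct.tmul_mul_tmul, counit_mul_slantRight_comul hlm]
    | add w w' hw hw' => simp only [add_mul, map_add, hw, hw']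
  | add t t' ht ht' => simp only [mul_add, map_add, ht, ht']

lemma mul_epsT (hpre : ComulMul R H) (hrm : RM R H) (u c : H) :
    u * epsT R H c = slantLeft (gmap R H c) (comul (R := R) u) := calc
  u * epsT R H c = slantLeft counit (comul (R := R) u * comul (epsT R H c)) := by
    rw [← hpre, slantLeft_counit_comul]
  _ = slantLeft counit (comul (R := R) u *
      (slantLeft (gmap R H c) ∘ₗ comul).rTensor H (comul (1 : H))) := by
    rw [epsT_eq_slantLeft, comul_slantLeft_comul]
  _ = slantLeft (gmap R H c) (comul (R := R) u) := by
    rw [slantLeft_counit_mul_rTensor hrm, ← hpre, mul_one]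

lemma mul_epsSbar (hpre : ComulMul R H) (hlm : LM R H) (u c : H) :
    u * epsSbar R H c = slantRight (gmap R H c) (comul (R := R) u) := calc
  u * epsSbar R H c = slantRight counit (comul (R := R) u * comul (epsSbar R H c)) := by
    rw [← hpre, slantRight_counit_comul]
  _ = slantRight counit (comul (R := R) u *
      (slantRight (gmap R H c) ∘ₗ comul).lTensor H (comul (1 : H))) := by
    rw [epsSbar_eq_slantRight, comul_slantRight_comul]
  _ = slantRight (gmap R H c) (comul (R := R) u) := by
    rw [slantRight_counit_mul_lTensor hlm, ← hpre, mul_one]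

lemma epsT_mul_epsT (hpre : ComulMul R H) (hrm : RM R H) (c d : H) :
    epsT R H c * epsT R H d = epsT R H (epsT R H c * d) := by
  have hc : LinearMap.mulRight R (epsT R H c) = slantLeft (gmap R H c) ∘ₗ comul :=
    LinearMap.ext fun u => mul_epsT hpre hrm u c
  rw [epsT_eq_slantLeft (epsT R H c * d), gmap_mul, hc, mul_epsT hpre hrm,
    epsT_eq_slantLeft c, comul_slantLeft_comul, slantLeft_rTensor]

lemma epsSbar_mul_epsSbar (hpre : ComulMul R H) (hlm : LM R H) (c d : H) :
    epsSbar R H c * epsSbar R H d = epsSbar R H (epsSbar R H c * d) := by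
  have hc : LinearMap.mulRight R (epsSbar R H c) = slantRight (gmap R H c) ∘ₗ comul :=
    LinearMap.ext fun u => mul_epsSbar hpre hlm u c
  rw [epsSbar_eq_slantRight (epsSbar R H c * d), gmap_mul, hc, mul_epsSbar hpre hlm,
    epsSbar_eq_slantRight c, comul_slantRight_comul, slantRight_lTensor]

lemma gmap_epsT_mul_eq_gmap_epsSbar_mul (hpre : ComulMul R H) (hlm : LM R H) (hrm : RM R H)
    (c d : H) : gmap R H (epsT R H c * d) = gmap R H (epsSbar R H d * c) := by
  ext u
  rw [gmap_mul, gmap_mul, LinearMap.comp_apply, LinearMap.comp_apply, LinearMap.mulRight_apply,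
    LinearMap.mulRight_apply, mul_epsT hpre hrm, mul_epsSbar hpre hlm, apply_slantLeft,
    apply_slantRight]

end Prebialgebra

/-- In a monoidal prebialgebra, `ε̄_s` restricts to an anti-algebra
isomorphism `H_t → H̄_s` with inverse the restriction of `ε_t`; in particular
`ε_t(y)ε_t(y') = ε_t(y'y)` for all `y, y' ∈ H̄_s`. -/
theorem m_epsSbar_antiIso
    (R H : Type) [CommRing R] [Ring H] [Algebra R H] [Coalgebra R H]
    (hpre : ComulMul R H) (hlm : LM R H) (hrm : RM R H) :
    (∀ z ∈ Set.range (epsT R H), epsT R H (epsSbar R H z) = z) ∧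
    (∀ y ∈ Set.range (epsSbar R H), epsSbar R H (epsT R H y) = y) ∧
    (epsSbar R H (1 : H) = 1) ∧
    (∀ z ∈ Set.range (epsT R H), ∀ z' ∈ Set.range (epsT R H),
      epsSbar R H (z * z') = epsSbar R H z' * epsSbar R H z) ∧
    (∀ y ∈ Set.range (epsSbar R H), ∀ y' ∈ Set.range (epsSbar R H),
      epsT R H y * epsT R H y' = epsT R H (y' * y)) := by
  refine ⟨?_, ?_, epsSbar_one, ?_, ?_⟩
  · rintro _ ⟨h, rfl⟩
    rw [epsT_epsSbar hlm, epsT_congr (gmap_epsT hrm h)]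
  · rintro _ ⟨h, rfl⟩
    rw [epsSbar_epsT hrm, epsSbar_congr (gmap_epsSbar hlm h)]
  · rintro _ ⟨h, rfl⟩ _ ⟨k, rfl⟩
    rw [epsT_mul_epsT hpre hrm, epsSbar_epsT hrm, epsSbar_epsT hrm, epsSbar_epsT hrm,
      epsSbar_mul_epsSbar hpre hlm]
    exact epsSbar_congr (gmap_epsT_mul_eq_gmap_epsSbar_mul hpre hlm hrm h k)
  · rintro _ ⟨c, rfl⟩ _ ⟨d, rfl⟩
    rw [epsT_epsSbar hlm, epsT_epsSbar hlm, epsSbar_mul_epsSbar hpre hlm, epsT_epsSbar hlm,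
      epsT_mul_epsT hpre hrm]
    exact epsT_congr (gmap_epsT_mul_eq_gmap_epsSbar_mul hpre hlm hrm c d)
end
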